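/- arXiv:1303.1559 — 8 statements merged into one kernel-verified Lean document; each statement's English description precedes it below -/
import Mathlib

section
/- Let G be a connected unweighted simple graph and let e = (u,v) be an edge of G. Then for every pair of vertices x, y of G, dist_{G∖e}(x,y) · dist_G(u,v) ≤ dist_{G∖e}(u,v) · dist_G(x,y) (with distances in ℕ∞, where a missing path gives distance ∞). Consequently the fragility of e, defined as max over vertex pairs x,y of dist_{G∖e}(x,y)/dist_G(x,y), is attained at the pair {u,v}, i.e. frag_G(e) = dist_{G∖e}(u,v)/dist_G(u,v). -/
/-!
Every edge `ab` of `G` other than `e = uv` survives in `G ∖ e`, and `e` itself can be replaced by a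
shortest `u`–`v` path of `G ∖ e`. Hence `dist_{G∖e}(a, b) ≤ dist_{G∖e}(u, v)` for every edge `ab`, and
summing along a shortest `x`–`y` path of `G` gives
`dist_{G∖e}(x, y) ≤ dist_{G∖e}(u, v) · dist_G(x, y)`, while `dist_G(u, v) = 1`.
-/

open SimpleGraph ENNReal

namespace SimpleGraph

variable {V : Type*} {G H : SimpleGraph V} {D : ℕ∞}

theorem edist_le_mul_length_of_forall_adj (hD : ∀ a b, G.Adj a b → H.edist a b ≤ D)
    {x y : V} (p : G.Walk x y) : H.edist x y ≤ D * p.length := by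
  induction p with
  | nil => simp
  | @cons a b c hab q ih =>
    calc H.edist a c ≤ H.edist a b + H.edist b c := SimpleGraph.edist_triangle
      _ ≤ D + D * q.length := add_le_add (hD a b hab) ih
      _ = D * (q.cons hab).length := by rw [Walk.length_cons]; push_cast; ring

theorem edist_le_mul_edist_of_forall_adj (hD0 : D ≠ 0)
    (hD : ∀ a b, G.Adj a b → H.edist a b ≤ D) (x y : V) :
    H.edist x y ≤ D * G.edist x y := by
  by_cases hxy : G.edist x y = ⊤
  · simp [hxy, hD0]
  · obtain ⟨p, hp⟩ := exists_walk_of_edist_ne_top hxy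
    exact hp ▸ edist_le_mul_length_of_forall_adj hD p

theorem edist_deleteEdges_le_of_adj {u v a b : V} (huv : u ≠ v) (hab : G.Adj a b) :
    (G.deleteEdges {s(u, v)}).edist a b ≤ (G.deleteEdges {s(u, v)}).edist u v := by
  by_cases he : s(a, b) = s(u, v)
  · rcases Sym2.eq_iff.mp he with ⟨rfl, rfl⟩ | ⟨rfl, rfl⟩
    · exact le_rfl
    · exact edist_comm.le
  · have hadj : (G.deleteEdges {s(u, v)}).Adj a b := by
      rw [deleteEdges_adj]
      exact ⟨hab, he⟩
    rw [edist_eq_one_iff_adj.mpr hadj]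
    exact Order.one_le_iff_ne_zero.mpr (edist_eq_zero_iff.not.mpr huv)

end SimpleGraph

theorem stmt_0_general {V : Type*} (G : SimpleGraph V)
    (u v : V) (huv : G.Adj u v) :
    (∀ x y : V,
      (G.deleteEdges {s(u,v)}).edist x y * G.edist u v ≤
        (G.deleteEdges {s(u,v)}).edist u v * G.edist x y) ∧
    (⨆ x : V, ⨆ y : V,
        ((G.deleteEdges {s(u,v)}).edist x y : ℝ≥0∞) / (G.edist x y : ℝ≥0∞)) =
      ((G.deleteEdges {s(u,v)}).edist u v : ℝ≥0∞) / (G.edist u v : ℝ≥0∞) := by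
  set G' := G.deleteEdges {s(u,v)}
  have hD0 : G'.edist u v ≠ 0 := edist_eq_zero_iff.not.mpr huv.ne
  have key (x y : V) : G'.edist x y ≤ G'.edist u v * G.edist x y :=
    edist_le_mul_edist_of_forall_adj hD0 (fun _ _ hab ↦ edist_deleteEdges_le_of_adj huv.ne hab) x y
  have huv1 : G.edist u v = 1 := edist_eq_one_iff_adj.mpr huv
  simp only [huv1, mul_one, ENat.toENNReal_one, div_one]
  refine ⟨key, le_antisymm (iSup₂_le fun x y ↦ ?_) (le_iSup₂_of_le u v (by simp [huv1]))⟩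
  -- `ℝ≥0∞` division needs no side conditions here: the pairs `x = y` (`0 / 0`) and unreachable
  -- pairs (`⊤ / ⊤`) both contribute `0`.
  exact ENNReal.div_le_of_le_mul (by exact_mod_cast key x y)

/-- In a connected unweighted simple graph `G` with edge `e = (u,v)`,
for all vertices `x, y` we have
`dist_{G∖e}(x,y) · dist_G(u,v) ≤ dist_{G∖e}(u,v) · dist_G(x,y)` (distances in `ℕ∞`),
and consequently the fragility `frag_G(e) = sup_{x,y} dist_{G∖e}(x,y) / dist_G(x,y)`
is attained at the pair `{u,v}`. -/
theorem stmt_0 {V : Type*} (G : SimpleGraph V) (hG : G.Connected)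
    (u v : V) (huv : G.Adj u v) :
    (∀ x y : V,
      (G.deleteEdges {s(u,v)}).edist x y * G.edist u v ≤
        (G.deleteEdges {s(u,v)}).edist u v * G.edist x y) ∧
    (⨆ x : V, ⨆ y : V,
        ((G.deleteEdges {s(u,v)}).edist x y : ℝ≥0∞) / (G.edist x y : ℝ≥0∞)) =
      ((G.deleteEdges {s(u,v)}).edist u v : ℝ≥0∞) / (G.edist u v : ℝ≥0∞) :=
  stmt_0_general G u v huv
end

section
/- For every integer t ≥ 3 there exist a finite connected unweighted simple graph G, a spanning subgraph S of G that is a 1-edge fault-tolerant t-spanner of G, and an edge e = (u,v) of S such that frag_G(e) is finite and frag_S(e) ≥ (t/2) · frag_G(e), i.e. dist_{S∖e}(u,v) ≥ (t/2) · dist_{G∖e}(u,v). In particular, 1-edge fault-tolerant t-spanners need not be σ-resilient for any σ < t/2 · frag_G(e). -/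
open SimpleGraph

/-- Lower bound: along any walk, a 1-Lipschitz function changes by at most the length. -/
lemma walk_lip {V : Type*} {H : SimpleGraph V} {f : V → ℕ}
    (hf : ∀ a b, H.Adj a b → f a ≤ f b + 1 ∧ f b ≤ f a + 1) :
    ∀ {x y : V} (p : H.Walk x y), f x ≤ f y + p.length ∧ f y ≤ f x + p.length := by
  intro x y p
  induction p with
  | nil => simp
  | cons h q ih =>
    have := hf _ _ h
    simp only [Walk.length_cons]
    omega

lemma edist_lower {V : Type*} {H : SimpleGraph V} {f : V → ℕ}
    (hf : ∀ a b, H.Adj a b → f a ≤ f b + 1 ∧ f b ≤ f a + 1) (x y : V)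
    (k : ℕ) (hk : f x + k ≤ f y) : (k : ℕ∞) ≤ H.edist x y := by
  rw [edist_eq_sInf]
  apply le_sInf
  rintro _ ⟨p, rfl⟩
  have h2 := (walk_lip hf p).2
  exact Nat.cast_le.mpr (by omega)

/-- Transfer: if every edge of `K` has an `H`-detour of length ≤ t, then H-distances are
at most t times K-distances. -/
lemma edist_transfer {V : Type*} {H K : SimpleGraph V} {t : ℕ} (ht : 1 ≤ t)
    (h : ∀ a b, K.Adj a b → H.edist a b ≤ t) (x y : V) :
    H.edist x y ≤ (t : ℕ∞) * K.edist x y := by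
  have key : ∀ (x y : V) (p : K.Walk x y), H.edist x y ≤ (t : ℕ∞) * p.length := by
    intro x y p
    induction p with
    | nil => simp
    | @cons a b c hadj q ih =>
      rw [Walk.length_cons]
      calc H.edist a c ≤ H.edist a b + H.edist b c := SimpleGraph.edist_triangle
        _ ≤ (t : ℕ∞) + (t : ℕ∞) * q.length := add_le_add (h _ _ hadj) ih
        _ = (t : ℕ∞) * ((q.length + 1 : ℕ) : ℕ∞) := by push_cast; ring
  by_cases hr : K.Reachable x y
  · obtain ⟨p, hp⟩ := hr.exists_walk_length_eq_edist
    rw [← hp]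
    exact key x y p
  · rw [edist_eq_top_of_not_reachable hr, ENat.mul_top]
    · exact le_top
    · exact_mod_cast Nat.one_le_iff_ne_zero.mp ht

/-- Chain upper bound on `Fin n`. -/
lemma chain_ub {n : ℕ} {H : SimpleGraph (Fin n)} :
    ∀ (k a b : ℕ) (ha : a < n) (hb : b < n), b = a + k →
    (∀ i, a ≤ i → i < b → ∀ (h1 : i < n) (h2 : i + 1 < n), H.Adj ⟨i, h1⟩ ⟨i + 1, h2⟩) →
    H.edist ⟨a, ha⟩ ⟨b, hb⟩ ≤ (k : ℕ∞) := by
  intro k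
  induction k with
  | zero =>
    intro a b ha hb hab _
    have : (⟨a, ha⟩ : Fin n) = ⟨b, hb⟩ := by simp [Fin.ext_iff]; omega
    rw [this]
    simp
  | succ k ih =>
    intro a b ha hb hab hadj
    have ha1 : a + 1 < n := by omega
    have h1 : H.edist ⟨a, ha⟩ ⟨a + 1, ha1⟩ ≤ 1 := by
      exact (edist_eq_one_iff_adj.mpr (hadj a le_rfl (by omega) ha ha1)).le
    have h2 : H.edist ⟨a + 1, ha1⟩ ⟨b, hb⟩ ≤ (k : ℕ∞) :=
      ih (a + 1) b ha1 hb (by omega) (fun i hi hib => hadj i (by omega) hib)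
    calc H.edist ⟨a, ha⟩ ⟨b, hb⟩ ≤ _ + _ := SimpleGraph.edist_triangle
      _ ≤ 1 + (k : ℕ∞) := add_le_add h1 h2
      _ = ((k + 1 : ℕ) : ℕ∞) := by push_cast; ring

/-- For every integer `t ≥ 3` there exist a finite connected graph `G`,
a spanning subgraph `S` that is a 1-edge fault-tolerant `t`-spanner of `G`, and an
edge `e = (u,v)` of `S` such that `frag_G(e)` is finite and
`frag_S(e) ≥ (t/2) · frag_G(e)`, i.e.
`2 · dist_{S∖e}(u,v) ≥ t · dist_{G∖e}(u,v)`. -/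
theorem stmt_2 (t : ℕ) (ht : 3 ≤ t) :
    ∃ (n : ℕ) (G S : SimpleGraph (Fin n)) (u v : Fin n),
      G.Connected ∧ S ≤ G ∧
      (∀ f ∈ G.edgeSet, ∀ x y : Fin n,
        (S.deleteEdges {f}).edist x y ≤ (t : ℕ∞) * (G.deleteEdges {f}).edist x y) ∧
      S.Adj u v ∧
      (G.deleteEdges {s(u,v)}).edist u v ≠ ⊤ ∧
      (t : ℕ∞) * (G.deleteEdges {s(u,v)}).edist u v ≤
        2 * (S.deleteEdges {s(u,v)}).edist u v := by
  set n := t + 1 with hn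
  have h0 : 0 < n := by omega
  have h1 : 1 < n := by omega
  have hv : t < n := by omega
  set S : SimpleGraph (Fin n) :=
    SimpleGraph.fromRel (fun a b => a.val + 1 = b.val ∨ (a.val = 0 ∧ b.val = t)) with hS
  set G : SimpleGraph (Fin n) :=
    SimpleGraph.fromRel
      (fun a b => a.val + 1 = b.val ∨ (a.val = 0 ∧ b.val = t) ∨ (a.val = 1 ∧ b.val = t))
    with hG
  set u : Fin n := ⟨0, h0⟩ with hu
  set m : Fin n := ⟨1, h1⟩ with hm
  set v : Fin n := ⟨t, hv⟩ with hvv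
  -- basic adjacency facts
  have hSG : S ≤ G := by
    intro a b hab
    rw [hS, fromRel_adj] at hab
    rw [hG, fromRel_adj]
    tauto
  have hSuv : S.Adj u v := by
    rw [hS, fromRel_adj]
    constructor
    · rw [hu, hvv]; simp only [ne_eq, Fin.mk.injEq]; omega
    · left; right; exact ⟨rfl, rfl⟩
  have hGConn : G.Connected := by
    refine (pathGraph_connected t).mono ?_
    intro a b hab
    rw [pathGraph_adj] at hab
    rw [hG, fromRel_adj]
    refine ⟨?_, ?_⟩
    · intro heq; subst heq; omega
    · rcases hab with h | h
      · left; left; exact h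
      · right; left; exact h
  -- the key chord claim: for any deleted edge f, S ∖ f still connects m and v within t
  have claim : ∀ f : Sym2 (Fin n), (S.deleteEdges {f}).edist m v ≤ (t : ℕ∞) := by
    intro f
    by_cases h0f : (u : Fin n) ∈ f
    · -- f touches vertex 0; use the long path 1-2-⋯-t
      have := chain_ub (H := S.deleteEdges {f}) (t - 1) 1 t h1 hv (by omega) ?_
      · refine le_trans ?_ (le_trans this (Nat.cast_le.mpr (by omega)))
        exact le_of_eq (by congr 1)
      · intro i hi hib hi1 hi2
        rw [deleteEdges_adj]
        constructor
        · rw [hS, fromRel_adj]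
          refine ⟨by simp only [ne_eq, Fin.mk.injEq]; omega, Or.inl (Or.inl rfl)⟩
        · simp only [Set.mem_singleton_iff]
          intro hf
          rw [← hf] at h0f
          rw [Sym2.mem_iff] at h0f
          rcases h0f with h | h <;> rw [hu, Fin.ext_iff] at h <;>
            simp only [Fin.val_mk] at h <;> omega
    · -- f avoids vertex 0; use the short path 1-0-t
      have hadj1 : (S.deleteEdges {f}).Adj m u := by
        rw [deleteEdges_adj]
        constructor
        · rw [hS, fromRel_adj]
          refine ⟨by simp [hu, hm, Fin.ext_iff], Or.inr (Or.inl ?_)⟩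
          simp [hu, hm]
        · simp only [Set.mem_singleton_iff]
          intro hf
          exact h0f (hf ▸ Sym2.mem_mk_right m u)
      have hadj2 : (S.deleteEdges {f}).Adj u v := by
        rw [deleteEdges_adj]
        constructor
        · rw [hS, fromRel_adj]
          refine ⟨by simp [hu, hvv, Fin.ext_iff]; omega, Or.inl (Or.inr ⟨rfl, rfl⟩)⟩
        · simp only [Set.mem_singleton_iff]
          intro hf
          exact h0f (hf ▸ Sym2.mem_mk_left u v)
      calc (S.deleteEdges {f}).edist m v
          ≤ (S.deleteEdges {f}).edist m u + (S.deleteEdges {f}).edist u v :=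
            SimpleGraph.edist_triangle
        _ ≤ 1 + 1 := add_le_add (edist_eq_one_iff_adj.mpr hadj1).le
            (edist_eq_one_iff_adj.mpr hadj2).le
        _ ≤ (t : ℕ∞) := by exact_mod_cast (show (2 : ℕ) ≤ t by omega)
  have hle2 : (G.deleteEdges {s(u,v)}).edist u v ≤ 2 := by
    have hadj1 : (G.deleteEdges {s(u,v)}).Adj u m := by
      rw [deleteEdges_adj]
      refine ⟨?_, ?_⟩
      · rw [hG, fromRel_adj]
        exact ⟨by simp [hu, hm, Fin.ext_iff], Or.inl (Or.inl (by simp [hu, hm]))⟩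
      · rw [hu, hm, hvv]
        simp only [Set.mem_singleton_iff, Sym2.eq_iff, Fin.mk.injEq]
        omega
    have hadj2 : (G.deleteEdges {s(u,v)}).Adj m v := by
      rw [deleteEdges_adj]
      refine ⟨?_, ?_⟩
      · rw [hG, fromRel_adj]
        exact ⟨by simp [hm, hvv, Fin.ext_iff]; omega, Or.inl (Or.inr (Or.inr ⟨rfl, rfl⟩))⟩
      · rw [hu, hm, hvv]
        simp only [Set.mem_singleton_iff, Sym2.eq_iff, Fin.mk.injEq]
        omega
    calc (G.deleteEdges {s(u,v)}).edist u v
        ≤ _ + _ := SimpleGraph.edist_triangle (v := m)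
      _ ≤ 1 + 1 := add_le_add (edist_eq_one_iff_adj.mpr hadj1).le
          (edist_eq_one_iff_adj.mpr hadj2).le
      _ = 2 := by norm_num
  refine ⟨n, G, S, u, v, hGConn, hSG, ?_, hSuv, ?_, ?_⟩
  · -- spanner property
    intro f _ x y
    refine edist_transfer (by omega) ?_ x y
    intro a b hab
    rw [deleteEdges_adj] at hab
    obtain ⟨hGab, hfab⟩ := hab
    rw [hG, fromRel_adj] at hGab
    obtain ⟨hne, hrel⟩ := hGab
    have hScase : (S.Adj a b) ∨ (a = m ∧ b = v) ∨ (a = v ∧ b = m) := by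
      rcases hrel with (h | h | h) | (h | h | h)
      · exact Or.inl ⟨hne, Or.inl (Or.inl h)⟩
      · exact Or.inl ⟨hne, Or.inl (Or.inr h)⟩
      · exact Or.inr (Or.inl ⟨by simp [hm, Fin.ext_iff, h.1], by simp [hvv, Fin.ext_iff, h.2]⟩)
      · exact Or.inl ⟨hne, Or.inr (Or.inl h)⟩
      · exact Or.inl ⟨hne, Or.inr (Or.inr h)⟩
      · exact Or.inr (Or.inr ⟨by simp [hvv, Fin.ext_iff, h.2], by simp [hm, Fin.ext_iff, h.1]⟩)
    rcases hScase with h | ⟨ha, hb⟩ | ⟨ha, hb⟩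
    · have : (S.deleteEdges {f}).Adj a b := by
        rw [deleteEdges_adj]; exact ⟨h, hfab⟩
      exact le_trans (edist_eq_one_iff_adj.mpr this).le (Nat.one_le_cast.mpr (by omega))
    · rw [ha, hb]; exact claim f
    · rw [ha, hb, SimpleGraph.edist_comm]; exact claim f
  · -- frag_G(e) finite: it is ≤ 2 via 0-1-t
    have hle2 : (G.deleteEdges {s(u,v)}).edist u v ≤ 2 := by
      have hadj1 : (G.deleteEdges {s(u,v)}).Adj u m := by
        rw [deleteEdges_adj]
        refine ⟨?_, ?_⟩
        · rw [hG, fromRel_adj]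
          exact ⟨by simp [hu, hm, Fin.ext_iff], Or.inl (Or.inl (by simp [hu, hm]))⟩
        · rw [hu, hm, hvv]
          simp only [Set.mem_singleton_iff, Sym2.eq_iff, Fin.mk.injEq]
          omega
      have hadj2 : (G.deleteEdges {s(u,v)}).Adj m v := by
        rw [deleteEdges_adj]
        refine ⟨?_, ?_⟩
        · rw [hG, fromRel_adj]
          exact ⟨by simp [hm, hvv, Fin.ext_iff]; omega, Or.inl (Or.inr (Or.inr ⟨rfl, rfl⟩))⟩
        · rw [hu, hm, hvv]
          simp only [Set.mem_singleton_iff, Sym2.eq_iff, Fin.mk.injEq]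
          omega
      calc (G.deleteEdges {s(u,v)}).edist u v
          ≤ _ + _ := SimpleGraph.edist_triangle (v := m)
        _ ≤ 1 + 1 := add_le_add (edist_eq_one_iff_adj.mpr hadj1).le
            (edist_eq_one_iff_adj.mpr hadj2).le
        _ = 2 := by norm_num
    exact ne_top_of_le_ne_top (by simp) hle2
  · -- final inequality
    have hlb : (t : ℕ∞) ≤ (S.deleteEdges {s(u,v)}).edist u v := by
      refine edist_lower (f := Fin.val) ?_ u v t (by simp [hu, hvv])
      intro a b hab
      rw [deleteEdges_adj] at hab
      obtain ⟨hab, hfab⟩ := hab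
      rw [hS, fromRel_adj] at hab
      obtain ⟨hne, hrel⟩ := hab
      rcases hrel with (h | h) | (h | h)
      · omega
      · exfalso
        apply hfab
        simp only [Set.mem_singleton_iff, Sym2.eq_iff]
        left
        exact ⟨by simp [hu, Fin.ext_iff, h.1], by simp [hvv, Fin.ext_iff, h.2]⟩
      · omega
      · exfalso
        apply hfab
        simp only [Set.mem_singleton_iff, Sym2.eq_iff]
        right
        exact ⟨by simp [hvv, Fin.ext_iff, h.2], by simp [hu, Fin.ext_iff, h.1]⟩
    calc (t : ℕ∞) * (G.deleteEdges {s(u,v)}).edist u v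
        ≤ (t : ℕ∞) * 2 := mul_le_mul' le_rfl hle2
      _ = 2 * (t : ℕ∞) := mul_comm _ _
      _ ≤ 2 * (S.deleteEdges {s(u,v)}).edist u v := mul_le_mul' le_rfl hlb
end

section
/- Let G be a connected unweighted simple graph, let α ≥ 1, β ≥ 0 and σ be integers with α + β ≤ σ, and let S be an (α,β)-spanner of G. Let R be a spanning subgraph of G with S ⊆ R ⊆ G such that for every edge e = (u,v) of S with frag_S(e) > σ that is not a bridge of G, R contains the edges of some shortest path between u and v in G∖e. Then R is an (α,β)-spanner of G, and R is σ-resilient: for every edge e = (u,v) of R, dist_{R∖e}(u,v) ≤ max{σ, dist_{G∖e}(u,v)} (with values in ℕ∞). -/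
open SimpleGraph

/-
An edge `e = (u,v)` of `R` falls into one of four cases. If `e` is a bridge of `G`, the
right-hand side is `∞`. If `e ∉ S`, then `S ∖ e = S ⊆ R ∖ e` and the spanner bound for the
`G`-edge `e` gives `dist_S(u,v) ≤ α + β ≤ σ`. If `e ∈ S` with `frag_S(e) ≤ σ`, monotonicity
suffices. Otherwise the backup path, which lies in `R` and avoids `e`, is a walk in `R ∖ e`
of length `dist_{G∖e}(u,v)`. The spanner property passes from `S` to `R ⊇ S` by monotonicity.
-/

namespace SimpleGraph

variable {V : Type*} {G H : SimpleGraph V} {u v : V}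

lemma edist_le_length_of_edges_subset (p : G.Walk u v) (hp : ∀ e ∈ p.edges, e ∈ H.edgeSet) :
    H.edist u v ≤ p.length := by
  simpa using edist_le (p.transfer H hp)

lemma edist_deleteEdges_eq_top_of_isBridge (h : G.IsBridge s(u, v)) :
    (G.deleteEdges {s(u, v)}).edist u v = ⊤ :=
  edist_eq_top_of_not_reachable (isBridge_iff.mp h)

lemma deleteEdges_singleton_eq_self_of_not_adj (h : ¬G.Adj u v) :
    G.deleteEdges {s(u, v)} = G := by
  simpa using h

lemma edist_le_add_of_adj_of_spanner {S : SimpleGraph V} {α β : ℕ}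
    (hspan : ∀ x y : V, S.edist x y ≤ (α : ℕ∞) * G.edist x y + (β : ℕ∞)) (h : G.Adj u v) :
    S.edist u v ≤ ((α + β : ℕ) : ℕ∞) := by
  simpa [edist_eq_one_iff_adj.mpr h] using hspan u v

lemma edist_deleteEdges_le_length_of_edges_subset {R : SimpleGraph V} {s : Set (Sym2 V)}
    (p : (G.deleteEdges s).Walk u v) (hp : ∀ e ∈ p.edges, e ∈ R.edgeSet) :
    (R.deleteEdges s).edist u v ≤ p.length := by
  refine edist_le_length_of_edges_subset p fun e he => ?_
  have he' := p.edges_subset_edgeSet he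
  rw [edgeSet_deleteEdges] at he' ⊢
  exact ⟨hp e he, he'.2⟩

end SimpleGraph

theorem stmt_3_general {V : Type*} (G S R : SimpleGraph V)
    (α β σ : ℕ) (hσ : α + β ≤ σ)
    (hSR : S ≤ R) (hRG : R ≤ G)
    (hspan : ∀ x y : V, S.edist x y ≤ (α : ℕ∞) * G.edist x y + (β : ℕ∞))
    (hbackup : ∀ u v : V, S.Adj u v →
      (σ : ℕ∞) < (S.deleteEdges {s(u,v)}).edist u v →
      ¬ G.IsBridge s(u,v) →
      ∃ p : (G.deleteEdges {s(u,v)}).Walk u v,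
        (p.length : ℕ∞) = (G.deleteEdges {s(u,v)}).edist u v ∧
        ∀ f ∈ p.edges, f ∈ R.edgeSet) :
    (∀ x y : V, R.edist x y ≤ (α : ℕ∞) * G.edist x y + (β : ℕ∞)) ∧
    (∀ u v : V, R.Adj u v →
      (R.deleteEdges {s(u,v)}).edist u v ≤
        max (σ : ℕ∞) ((G.deleteEdges {s(u,v)}).edist u v)) := by
  refine ⟨fun x y => (edist_anti hSR).trans (hspan x y), fun u v huv => ?_⟩
  have hRS : (R.deleteEdges {s(u,v)}).edist u v ≤ (S.deleteEdges {s(u,v)}).edist u v :=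
    edist_anti (deleteEdges_mono hSR)
  by_cases hbr : G.IsBridge s(u,v)
  · rw [edist_deleteEdges_eq_top_of_isBridge hbr]
    exact le_top.trans (le_max_right _ _)
  by_cases hS : S.Adj u v
  · rcases le_or_gt ((S.deleteEdges {s(u,v)}).edist u v) σ with hle | hgt
    · exact (hRS.trans hle).trans (le_max_left _ _)
    · obtain ⟨p, hplen, hpR⟩ := hbackup u v hS hgt hbr
      exact (hplen ▸ edist_deleteEdges_le_length_of_edges_subset p hpR).trans (le_max_right _ _)
  · calc (R.deleteEdges {s(u,v)}).edist u v
        ≤ S.edist u v := deleteEdges_singleton_eq_self_of_not_adj hS ▸ hRS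
      _ ≤ ((α + β : ℕ) : ℕ∞) := edist_le_add_of_adj_of_spanner hspan (hRG huv)
      _ ≤ σ := by exact_mod_cast hσ
      _ ≤ _ := le_max_left _ _

/-- Let `S` be an `(α,β)`-spanner of a connected graph `G` with
`α + β ≤ σ`, and let `R` with `S ⊆ R ⊆ G` contain, for every edge `e = (u,v)` of `S`
with `frag_S(e) > σ` that is not a bridge of `G`, the edges of some shortest path
between `u` and `v` in `G∖e`. Then `R` is an `(α,β)`-spanner of `G` and `R` is
`σ`-resilient: for every edge `e = (u,v)` of `R`,
`dist_{R∖e}(u,v) ≤ max {σ, dist_{G∖e}(u,v)}`. -/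
theorem stmt_3 {V : Type*} (G S R : SimpleGraph V) (hG : G.Connected)
    (α β σ : ℕ) (hα : 1 ≤ α) (hσ : α + β ≤ σ)
    (hSR : S ≤ R) (hRG : R ≤ G)
    (hspan : ∀ x y : V, S.edist x y ≤ (α : ℕ∞) * G.edist x y + (β : ℕ∞))
    (hbackup : ∀ u v : V, S.Adj u v →
      (σ : ℕ∞) < (S.deleteEdges {s(u,v)}).edist u v →
      ¬ G.IsBridge s(u,v) →
      ∃ p : (G.deleteEdges {s(u,v)}).Walk u v,
        (p.length : ℕ∞) = (G.deleteEdges {s(u,v)}).edist u v ∧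
        ∀ f ∈ p.edges, f ∈ R.edgeSet) :
    (∀ x y : V, R.edist x y ≤ (α : ℕ∞) * G.edist x y + (β : ℕ∞)) ∧
    (∀ u v : V, R.Adj u v →
      (R.deleteEdges {s(u,v)}).edist u v ≤
        max (σ : ℕ∞) ((G.deleteEdges {s(u,v)}).edist u v)) :=
  stmt_3_general G S R α β σ hσ hSR hRG hspan hbackup
end

section
/- For every positive integer σ there exists a constant c > 0 such that for every unweighted simple graph G on n vertices, the number of edges e of G with frag_G(e) > σ is at most c · n^{1 + 1/⌊(σ+1)/2⌋}. -/
/-!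
Let `H` be the graph of the edges of `G` whose fragility exceeds `σ`. Deleting edges only
lengthens detours, so every edge of `H` still has fragility `> σ` in `H`, and the same holds in
every induced subgraph of `H`. Put `k = ⌊(σ + 1) / 2⌋`. Around any vertex of such a graph with
minimum degree `> d`, the distance spheres grow by a factor `d` for `k` steps: a vertex with two
neighbours no farther from the centre would give a detour of length `≤ σ` around one of its
edges. Hence such a graph has more than `d ^ k` vertices, so for `d = ⌈n ^ (1 / k)⌉` every
induced subgraph of `H` has a vertex of degree `≤ d`, and `H` has at most
`d n ≤ 2 n ^ (1 + 1 / k)` edges.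
-/

open SimpleGraph Finset

namespace SimpleGraph

variable {V W : Type*} {G : SimpleGraph V} {G' : SimpleGraph W}

lemma Hom.edist_le (f : G →g G') (u v : V) : G'.edist (f u) (f v) ≤ G.edist u v := by
  rw [edist_eq_sInf (G := G)]
  exact le_sInf <| by rintro _ ⟨p, rfl⟩; simpa using SimpleGraph.edist_le (p.map f)

noncomputable def fragility (G : SimpleGraph V) (u v : V) : ℕ∞ :=
  (G.deleteEdges {s(u, v)}).edist u v

lemma fragility_le_length {u v : V} (p : G.Walk u v) (hp : s(u, v) ∉ p.edges) :
    G.fragility u v ≤ p.length := by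
  have hdel : ∀ e ∈ p.edges, e ∈ (G.deleteEdges {s(u, v)}).edgeSet := fun e he => by
    simpa [edgeSet_deleteEdges] using ⟨p.edges_subset_edgeSet he, ne_of_mem_of_not_mem he hp⟩
  simpa [fragility] using edist_le (p.transfer _ hdel)

lemma Copy.fragility_le (f : Copy G G') (u v : V) :
    G'.fragility (f u) (f v) ≤ G.fragility u v :=
  Hom.edist_le (G := G.deleteEdges {s(u, v)}) (G' := G'.deleteEdges {s(f u, f v)})
    ⟨f, fun {a b} hab => by
      simp only [deleteEdges_adj, Set.mem_singleton_iff] at hab ⊢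
      refine ⟨f.toHom.map_adj hab.1, fun h => hab.2 (Sym2.map.injective f.injective ?_)⟩
      simpa using h⟩ u v

-- Equivalently, every cycle of `G` has length greater than `σ + 1`.
def IsFragile (σ : ℕ) (G : SimpleGraph V) : Prop :=
  ∀ ⦃u v : V⦄, G.Adj u v → σ < G.fragility u v

lemma IsFragile.of_copy {σ : ℕ} (hG' : G'.IsFragile σ) (f : Copy G G') : G.IsFragile σ :=
  fun _ _ huv => (hG' (f.toHom.map_adj huv)).trans_le (f.fragility_le _ _)

lemma Walk.edist_lt_of_mem_support [DecidableEq V] {v a u : V} (p : G.Walk v a)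
    (hp : p.length = G.edist v a) (hu : u ∈ p.support) (hua : u ≠ a) :
    G.edist v u < G.edist v a :=
  calc G.edist v u ≤ (p.takeUntil u hu).length := edist_le _
    _ < p.length := by exact_mod_cast p.length_takeUntil_lt_length hu hua
    _ = G.edist v a := hp

lemma IsFragile.lt_edist_add_edist {σ : ℕ} (hG : G.IsFragile σ) {v u a b : V}
    (hua : G.Adj u a) (hub : G.Adj u b) (hab : a ≠ b)
    (ha : G.edist v a ≤ G.edist v u) (hb : G.edist v b ≤ G.edist v u) :
    σ < G.edist v a + G.edist v b + 1 := by
  by_cases hinf : G.edist v a = ⊤ ∨ G.edist v b = ⊤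
  · rcases hinf with h | h <;> simp [h]
  rw [not_or] at hinf
  classical
  -- Shortest paths from `v` to `a` and `b` avoid `u`, so `u → b ⇝ v ⇝ a` avoids the edge
  -- `s(u, a)`.
  obtain ⟨pa, hpa⟩ := exists_walk_of_edist_ne_top hinf.1
  obtain ⟨pb, hpb⟩ := exists_walk_of_edist_ne_top hinf.2
  have hu_pa : u ∉ pa.support := fun hu => (pa.edist_lt_of_mem_support hpa hu hua.ne).not_ge ha
  have hu_pb : u ∉ pb.support := fun hu => (pb.edist_lt_of_mem_support hpb hu hub.ne).not_ge hb
  let q := pb.reverse.append pa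
  have hu_q : u ∉ q.support := by simp [q, Walk.mem_support_append_iff, hu_pa, hu_pb]
  have hua_cycle : s(u, a) ∉ (Walk.cons hub q).edges := by
    simp only [Walk.edges_cons, List.mem_cons, not_or]
    exact ⟨fun h => hab (Sym2.congr_right.mp h),
      fun h => hu_q (q.fst_mem_support_of_mem_edges h)⟩
  calc (σ : ℕ∞) < G.fragility u a := hG hua
    _ ≤ (Walk.cons hub q).length := fragility_le_length _ hua_cycle
    _ = G.edist v a + G.edist v b + 1 := by simp [q, ← hpa, ← hpb]; ring

lemma edist_eq_add_one_of_adj {v u w : V} {i : ℕ} (hu : G.edist v u = i) (huw : G.Adj u w)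
    (hw : ¬G.edist v w ≤ i) : G.edist v w = i + 1 := by
  refine le_antisymm ?_ ((ENat.add_one_le_iff (ENat.natCast_ne_top i)).mpr (not_le.mp hw))
  calc G.edist v w ≤ G.edist v u + G.edist u w := G.edist_triangle
    _ = i + 1 := by rw [hu, edist_eq_one_iff_adj.mpr huw]

section Spheres

variable [Fintype V]

noncomputable def sphere (G : SimpleGraph V) (v : V) (i : ℕ) : Finset V := {w | G.edist v w = i}

@[simp] lemma mem_sphere {v w : V} {i : ℕ} : w ∈ G.sphere v i ↔ G.edist v w = i := by
  simp [sphere]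

variable [DecidableRel G.Adj] {σ : ℕ}

lemma IsFragile.card_neighbors_edist_le_le_one (hG : G.IsFragile σ) {v u : V} {i : ℕ}
    (hi : 2 * i + 1 ≤ σ) (hu : i ≤ G.edist v u) :
    #{w ∈ G.neighborFinset u | G.edist v w ≤ i} ≤ 1 := by
  refine card_le_one.mpr fun a ha b hb => by_contra fun hab => ?_
  simp only [mem_filter, mem_neighborFinset] at ha hb
  refine (hG.lt_edist_add_edist ha.1 hb.1 hab (ha.2.trans hu) (hb.2.trans hu)).not_ge ?_
  calc G.edist v a + G.edist v b + 1 ≤ i + i + 1 := by gcongr; exacts [ha.2, hb.2]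
    _ ≤ σ := by exact_mod_cast (by omega : i + i + 1 ≤ σ)

lemma IsFragile.card_sphere_mul_le (hG : G.IsFragile σ) (v : V) {i s : ℕ}
    (hi : 2 * i + 1 ≤ σ) (hdeg : ∀ x, s < G.degree x) :
    #(G.sphere v i) * s ≤ #(G.sphere v (i + 1)) := by
  classical
  have hm : ∀ u ∈ G.sphere v i, s ≤ #((G.sphere v (i + 1)).bipartiteAbove G.Adj u) := by
    intro u hu
    rw [mem_sphere] at hu
    have hcover : G.neighborFinset u ⊆ (G.sphere v (i + 1)).bipartiteAbove G.Adj u ∪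
        {w ∈ G.neighborFinset u | G.edist v w ≤ i} := by
      intro w hw
      rw [mem_neighborFinset] at hw
      by_cases hwi : G.edist v w ≤ i
      · simp [hw, hwi]
      · simp [hw, edist_eq_add_one_of_adj hu hw hwi]
    have := (G.card_neighborFinset_eq_degree u ▸ card_le_card hcover).trans (card_union_le _ _)
    have := hG.card_neighbors_edist_le_le_one hi hu.ge
    have := hdeg u
    omega
  have hn : ∀ w ∈ G.sphere v (i + 1), #((G.sphere v i).bipartiteBelow G.Adj w) ≤ 1 := by
    intro w hw
    rw [mem_sphere] at hw
    have hi_le : (i : ℕ∞) ≤ G.edist v w := by rw [hw]; exact_mod_cast i.le_succ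
    refine (card_le_card fun a ha => ?_).trans (hG.card_neighbors_edist_le_le_one hi hi_le)
    simp only [mem_bipartiteBelow, mem_sphere] at ha
    simp [ha.2.symm, ha.1]
  simpa using card_mul_le_card_mul _ hm hn

lemma IsFragile.pow_le_card_sphere (hG : G.IsFragile σ) (v : V) {k s : ℕ} (hk : 2 * k ≤ σ + 1)
    (hdeg : ∀ x, s < G.degree x) {i : ℕ} (hi : i ≤ k) : s ^ i ≤ #(G.sphere v i) := by
  induction i with
  | zero => simpa using ⟨v, by simp⟩
  | succ i ih =>
    calc s ^ (i + 1) = s ^ i * s := pow_succ s i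
      _ ≤ #(G.sphere v i) * s := Nat.mul_le_mul_right s (ih (by omega))
      _ ≤ #(G.sphere v (i + 1)) := hG.card_sphere_mul_le v (by omega) hdeg

lemma IsFragile.pow_lt_card (hG : G.IsFragile σ) (v : V) {k s : ℕ} (hk1 : 1 ≤ k)
    (hk : 2 * k ≤ σ + 1) (hdeg : ∀ x, s < G.degree x) : s ^ k < Fintype.card V :=
  (hG.pow_le_card_sphere v hk hdeg le_rfl).trans_lt <|
    card_lt_univ_of_notMem (x := v) (by simpa [eq_comm] using Nat.one_le_iff_ne_zero.mp hk1)

end Spheres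

section Degenerate

variable [DecidableRel G.Adj] {d : ℕ}

def IsDegenerate (d : ℕ) (G : SimpleGraph V) [DecidableRel G.Adj] : Prop :=
  ∀ T : Finset V, T.Nonempty → ∃ x ∈ T, #{y ∈ T | G.Adj x y} ≤ d

lemma sum_card_adj_insert [DecidableEq V] {x : V} {T : Finset V} (hx : x ∉ T) :
    ∑ y ∈ insert x T, #{z ∈ insert x T | G.Adj y z} =
      ∑ y ∈ T, #{z ∈ T | G.Adj y z} + 2 * #{z ∈ T | G.Adj x z} := by
  simp only [card_filter, sum_insert hx, sum_add_distrib, G.loopless.irrefl, if_false]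
  simp [adj_comm]
  ring

lemma IsDegenerate.sum_card_adj_le [DecidableEq V] (hG : G.IsDegenerate d) (T : Finset V) :
    ∑ y ∈ T, #{z ∈ T | G.Adj y z} ≤ 2 * d * #T := by
  induction T using Finset.strongInduction with
  | H T ih =>
    obtain rfl | hT := T.eq_empty_or_nonempty
    · simp
    obtain ⟨x, hx, hxd⟩ := hG T hT
    rw [← insert_erase hx, sum_card_adj_insert (notMem_erase x T),
      card_insert_of_notMem (notMem_erase x T)]
    have := ih _ (erase_ssubset hx)
    have : #{z ∈ T.erase x | G.Adj x z} ≤ d :=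
      (card_le_card (filter_subset_filter _ (erase_subset x T))).trans hxd
    nlinarith

lemma IsDegenerate.card_edgeFinset_le [Fintype V] (hG : G.IsDegenerate d) :
    #G.edgeFinset ≤ d * Fintype.card V := by
  classical
  have := hG.sum_card_adj_le univ
  have hdeg : ∀ y, G.degree y = #{z | G.Adj y z} := fun y => by
    rw [← card_neighborFinset_eq_degree, neighborFinset_eq_filter]
  rw [← sum_congr rfl fun y _ => hdeg y, sum_degrees_eq_twice_card_edges, card_univ] at this
  linarith

end Degenerate

lemma degree_induce_finset [Fintype V] [DecidableRel G.Adj] (T : Finset V)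
    (x : (T : Set V)) : (G.induce T).degree x = #{y ∈ T | G.Adj x y} := by
  rw [← card_neighborFinset_eq_degree]
  refine card_nbij Subtype.val (fun y hy => by simpa using hy) Subtype.val_injective.injOn
    fun y hy => ?_
  simp only [coe_filter] at hy
  exact ⟨⟨y, hy.1⟩, by simpa using hy.2, rfl⟩

lemma IsFragile.isDegenerate [Fintype V] [DecidableRel G.Adj] {σ k d : ℕ}
    (hG : G.IsFragile σ) (hk1 : 1 ≤ k) (hk : 2 * k ≤ σ + 1) (hd : Fintype.card V ≤ d ^ k) :
    G.IsDegenerate d := by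
  intro T hT
  by_contra! hlarge
  have hT_deg : ∀ x : (T : Set V), d < (G.induce T).degree x := fun x =>
    (degree_induce_finset (G := G) T x).symm ▸ hlarge x x.2
  have hT_card : d ^ k < #T := by
    simpa using (hG.of_copy (Copy.induce G T)).pow_lt_card ⟨_, hT.choose_spec⟩ hk1 hk hT_deg
  exact (hT_card.trans_le (card_le_univ T)).not_ge hd

lemma IsFragile.ncard_edgeSet_le [Fintype V] {σ k d : ℕ}
    (hG : G.IsFragile σ) (hk1 : 1 ≤ k) (hk : 2 * k ≤ σ + 1) (hd : Fintype.card V ≤ d ^ k) :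
    G.edgeSet.ncard ≤ d * Fintype.card V := by
  classical
  rw [← coe_edgeFinset, Set.ncard_coe_finset]
  exact (hG.isDegenerate hk1 hk hd).card_edgeFinset_le

def fragileEdgeSet (G : SimpleGraph V) (σ : ℕ) : Set (Sym2 V) :=
  {e ∈ G.edgeSet | ∀ u v : V, e = s(u, v) → (σ : ℕ∞) < (G.deleteEdges {e}).edist u v}

lemma fragileEdgeSet_subset_edgeSet (σ : ℕ) : G.fragileEdgeSet σ ⊆ G.edgeSet :=
  fun _ he => he.1

lemma edgeSet_fromEdgeSet_fragileEdgeSet (σ : ℕ) :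
    (fromEdgeSet (G.fragileEdgeSet σ)).edgeSet = G.fragileEdgeSet σ := by
  rw [edgeSet_fromEdgeSet, sdiff_eq_left, ← Set.subset_compl_iff_disjoint_right]
  exact (fragileEdgeSet_subset_edgeSet σ).trans (edgeSet_subset_compl_diagSet G)

lemma isFragile_fromEdgeSet_fragileEdgeSet (σ : ℕ) :
    (fromEdgeSet (G.fragileEdgeSet σ)).IsFragile σ := by
  intro u v huv
  have hle : fromEdgeSet (G.fragileEdgeSet σ) ≤ G := by
    simpa using Set.sdiff_subset.trans (fragileEdgeSet_subset_edgeSet σ)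
  rw [fromEdgeSet_adj] at huv
  exact (huv.1.2 u v rfl).trans_le ((Copy.ofLE _ _ hle).fragility_le u v)

end SimpleGraph

lemma le_natCeil_rpow_inv_pow (n : ℕ) {k : ℕ} (hk : k ≠ 0) :
    n ≤ ⌈(n : ℝ) ^ (k : ℝ)⁻¹⌉₊ ^ k := by
  have := pow_le_pow_left₀ (by positivity) (Nat.le_ceil ((n : ℝ) ^ (k : ℝ)⁻¹)) k
  rw [Real.rpow_inv_natCast_pow n.cast_nonneg hk] at this
  exact_mod_cast this

lemma natCeil_rpow_inv_mul_le (n k : ℕ) :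
    (⌈(n : ℝ) ^ (k : ℝ)⁻¹⌉₊ : ℝ) * n ≤ 2 * (n : ℝ) ^ (1 + 1 / (k : ℝ)) := by
  rcases n.eq_zero_or_pos with rfl | hn
  · simp only [CharP.cast_eq_zero, mul_zero]
    positivity
  have hroot : 1 ≤ (n : ℝ) ^ (k : ℝ)⁻¹ :=
    Real.one_le_rpow (by exact_mod_cast hn) (by positivity)
  calc (⌈(n : ℝ) ^ (k : ℝ)⁻¹⌉₊ : ℝ) * n
      ≤ ((n : ℝ) ^ (k : ℝ)⁻¹ + 1) * n := by
        gcongr; exact (Nat.ceil_lt_add_one (by positivity)).le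
    _ ≤ 2 * (n : ℝ) ^ (k : ℝ)⁻¹ * n := by gcongr; linarith
    _ = 2 * (n : ℝ) ^ (1 + 1 / (k : ℝ)) := by
        rw [Real.rpow_add (by exact_mod_cast hn), Real.rpow_one, one_div]; ring

/-- For every positive integer `σ` there is a constant `c > 0` such that
every simple graph `G` on `n` vertices has at most `c · n^(1 + 1/⌊(σ+1)/2⌋)` edges `e`
with `frag_G(e) > σ`. -/
theorem stmt_7 (σ : ℕ) (hσ : 0 < σ) :
    ∃ c : ℝ, 0 < c ∧ ∀ (n : ℕ) (G : SimpleGraph (Fin n)),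
      (({e ∈ G.edgeSet | ∀ u v : Fin n, e = s(u,v) →
          (σ : ℕ∞) < (G.deleteEdges {e}).edist u v}).ncard : ℝ) ≤
        c * (n : ℝ) ^ ((1 : ℝ) + 1 / (((σ + 1) / 2 : ℕ) : ℝ)) := by
  refine ⟨2, two_pos, fun n G => ?_⟩
  set k := (σ + 1) / 2
  have hk1 : 1 ≤ k := by omega
  have hk : 2 * k ≤ σ + 1 := by omega
  change ((G.fragileEdgeSet σ).ncard : ℝ) ≤ _
  rw [← edgeSet_fromEdgeSet_fragileEdgeSet]
  have hcount := (isFragile_fromEdgeSet_fragileEdgeSet (G := G) σ).ncard_edgeSet_le hk1 hk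
    (by simpa using le_natCeil_rpow_inv_pow n (k := k) (by omega))
  calc ((fromEdgeSet (G.fragileEdgeSet σ)).edgeSet.ncard : ℝ)
      ≤ (⌈(n : ℝ) ^ (k : ℝ)⁻¹⌉₊ * n : ℕ) := by
        exact_mod_cast Fintype.card_fin n ▸ hcount
    _ ≤ 2 * (n : ℝ) ^ (1 + 1 / (k : ℝ)) := by push_cast; exact natCeil_rpow_inv_mul_le n k
end

section
/- Let G be an unweighted simple graph, let e be an edge of G, and let C be a shortest cycle of G containing e (a short cycle for e). Let x and y be two distinct vertices on C. Then x and y split C into two edge-disjoint x–y paths C_e and C_ē, where C_e contains e and C_ē avoids e, and moreover: the length of C_e equals the minimum length of an x–y path in G containing edge e, and the length of C_ē equals the minimum length of an x–y path in G avoiding edge e. -/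
/-!
A shortest cycle `C` through `e` is cut by `x` and `y` into two internally disjoint `x`–`y`
paths, exactly one of which contains `e`. If some `x`–`y` path `W` through `e` were shorter than
the arc `C_e`, then `W` followed by the arc `C_ē` backwards would be a closed walk using `e`
exactly once; removing `e` from it leaves a walk between the ends of `e` that avoids `e`, and
shortening that walk to a path and closing it with `e` gives a cycle through `e` shorter than `C`.
The same argument, with `C_e` and a shorter `e`-avoiding path, handles `C_ē`.
-/

open SimpleGraph

namespace SimpleGraph.Walk

variable {V : Type*} {G : SimpleGraph V}

lemma exists_eq_append_cons_of_mem_edges {e : Sym2 V} :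
    ∀ {x y : V} (p : G.Walk x y), e ∈ p.edges →
      ∃ (a b : V) (hab : G.Adj a b) (p₁ : G.Walk x a) (p₂ : G.Walk b y),
        s(a, b) = e ∧ p = p₁.append (cons hab p₂)
  | _, _, nil, he => by simp at he
  | _, _, cons h p, he => by
    rcases List.mem_cons.mp he with rfl | he
    · exact ⟨_, _, h, nil, p, rfl, rfl⟩
    · obtain ⟨a, b, hab, p₁, p₂, rfl, rfl⟩ := exists_eq_append_cons_of_mem_edges p he
      exact ⟨a, b, hab, cons h p₁, p₂, rfl, rfl⟩

lemma exists_isCycle_length_le_of_notMem_edges [DecidableEq V] {a b : V} (hab : G.Adj a b)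
    (p : G.Walk b a) (hp : s(a, b) ∉ p.edges) :
    ∃ c : G.Walk a a, c.IsCycle ∧ s(a, b) ∈ c.edges ∧ c.length ≤ p.length + 1 :=
  ⟨cons hab p.bypass,
    (cons_isCycle_iff _ hab).mpr ⟨p.bypass_isPath, fun h => hp (p.edges_bypass_subset_edges h)⟩,
    by simp, by simpa using p.length_bypass_le_length⟩

lemma exists_isCycle_length_le_of_isTrail {e : Sym2 V} {x y : V} {W Q : G.Walk x y}
    (hW : W.IsTrail) (heW : e ∈ W.edges) (heQ : e ∉ Q.edges) :
    ∃ (b : V) (c : G.Walk b b), c.IsCycle ∧ e ∈ c.edges ∧ c.length ≤ W.length + Q.length := by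
  classical
  obtain ⟨a, b, hab, p₁, p₂, rfl, rfl⟩ := exists_eq_append_cons_of_mem_edges W heW
  have hnodup := hW.edges_nodup
  rw [edges_append, edges_cons, List.nodup_middle, List.nodup_cons] at hnodup
  obtain ⟨hp₁, hp₂⟩ : s(a, b) ∉ p₁.edges ∧ s(a, b) ∉ p₂.edges := by
    simpa only [List.mem_append, not_or] using hnodup.1
  obtain ⟨c, hc, hec, hlen⟩ := exists_isCycle_length_le_of_notMem_edges hab
    (p₂.append (Q.reverse.append p₁)) (by simp [hp₁, hp₂, heQ])
  exact ⟨a, c, hc, hec, by simp at hlen ⊢; omega⟩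

lemma IsCycle.exists_isPath_split {a x y : V} {C : G.Walk a a} (hC : C.IsCycle) (hxy : x ≠ y)
    (hx : x ∈ C.support) (hy : y ∈ C.support) :
    ∃ P Q : G.Walk x y, P.IsPath ∧ Q.IsPath ∧ P.edges.Disjoint Q.edges ∧
      (∀ f, f ∈ C.edges ↔ f ∈ P.edges ∨ f ∈ Q.edges) ∧ P.length + Q.length = C.length := by
  classical
  set C' := C.rotate x hx
  have hC' : C'.IsCycle := hC.rotate hx
  have hy' : y ∈ C'.support := (C.mem_support_rotate_iff x hx).mpr hy
  have hsplit : (C'.takeUntil y hy').append (C'.dropUntil y hy') = C' := C'.take_spec hy'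
  have hedges : C'.edges = (C'.takeUntil y hy').edges ++ (C'.dropUntil y hy').edges := by
    rw [← edges_append, hsplit]
  refine ⟨C'.takeUntil y hy', (C'.dropUntil y hy').reverse, hC'.isPath_takeUntil hy',
    (IsCycle.isPath_of_append_right (not_nil_of_ne hxy) (hsplit ▸ hC')).reverse, ?_, ?_, ?_⟩
  · simpa using hC'.isTrail.disjoint_edges_takeUntil_dropUntil hy'
  · intro f
    rw [← (C.rotate_edges x hx).perm.mem_iff, hedges]
    simp
  · rw [length_reverse, ← length_append, hsplit, length_rotate]

end SimpleGraph.Walk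

theorem stmt_8_general {V : Type*} (G : SimpleGraph V) (u v : V)
    (a : V) (C : G.Walk a a) (hC : C.IsCycle) (heC : s(u,v) ∈ C.edges)
    (hshort : ∀ (b : V) (D : G.Walk b b), D.IsCycle → s(u,v) ∈ D.edges →
      C.length ≤ D.length)
    (x y : V) (hxy : x ≠ y) (hx : x ∈ C.support) (hy : y ∈ C.support) :
    ∃ (P Q : G.Walk x y), P.IsPath ∧ Q.IsPath ∧
      s(u,v) ∈ P.edges ∧ s(u,v) ∉ Q.edges ∧
      P.edges.Disjoint Q.edges ∧
      (∀ f : Sym2 V, f ∈ C.edges ↔ (f ∈ P.edges ∨ f ∈ Q.edges)) ∧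
      P.length + Q.length = C.length ∧
      (∀ W : G.Walk x y, W.IsPath → s(u,v) ∈ W.edges → P.length ≤ W.length) ∧
      (∀ W : G.Walk x y, W.IsPath → s(u,v) ∉ W.edges → Q.length ≤ W.length) := by
  obtain ⟨P, Q, hP, hQ, hdisj, hedges, hlen⟩ := hC.exists_isPath_split hxy hx hy
  wlog heP : s(u,v) ∈ P.edges generalizing P Q
  · exact this Q P hQ hP hdisj.symm (fun f => (hedges f).trans or_comm) (by omega)
      (((hedges _).mp heC).resolve_left heP)
  have heQ : s(u,v) ∉ Q.edges := hdisj heP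
  refine ⟨P, Q, hP, hQ, heP, heQ, hdisj, hedges, hlen, ?_, ?_⟩
  · intro W hW heW
    obtain ⟨b, D, hD, heD, hDlen⟩ := Walk.exists_isCycle_length_le_of_isTrail hW.isTrail heW heQ
    have := hshort b D hD heD
    omega
  · intro W hW heW
    obtain ⟨b, D, hD, heD, hDlen⟩ := Walk.exists_isCycle_length_le_of_isTrail hP.isTrail heP heW
    have := hshort b D hD heD
    omega

/-- Let `C` be a shortest cycle of `G` containing the edge `e = (u,v)`,
and let `x ≠ y` be two vertices on `C`. Then `x` and `y` split `C` into two
edge-disjoint `x`–`y` paths `P = C_e` (containing `e`) and `Q = C_ē` (avoiding `e`)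
whose edges are exactly those of `C`; moreover the length of `P` is the minimum
length of an `x`–`y` path containing `e` and the length of `Q` is the minimum length
of an `x`–`y` path avoiding `e`. -/
theorem stmt_8 {V : Type*} (G : SimpleGraph V) (u v : V) (huv : G.Adj u v)
    (a : V) (C : G.Walk a a) (hC : C.IsCycle) (heC : s(u,v) ∈ C.edges)
    (hshort : ∀ (b : V) (D : G.Walk b b), D.IsCycle → s(u,v) ∈ D.edges →
      C.length ≤ D.length)
    (x y : V) (hxy : x ≠ y) (hx : x ∈ C.support) (hy : y ∈ C.support) :
    ∃ (P Q : G.Walk x y), P.IsPath ∧ Q.IsPath ∧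
      s(u,v) ∈ P.edges ∧ s(u,v) ∉ Q.edges ∧
      P.edges.Disjoint Q.edges ∧
      (∀ f : Sym2 V, f ∈ C.edges ↔ (f ∈ P.edges ∨ f ∈ Q.edges)) ∧
      P.length + Q.length = C.length ∧
      (∀ W : G.Walk x y, W.IsPath → s(u,v) ∈ W.edges → P.length ≤ W.length) ∧
      (∀ W : G.Walk x y, W.IsPath → s(u,v) ∉ W.edges → Q.length ≤ W.length) :=
  stmt_8_general G u v a C hC heC hshort x y hxy hx hy
end

section
/- Let G be an unweighted simple graph on n vertices and let C_1, C_2, …, C_q be cycles of G. For each i, let V_i denote the vertex set of C_i, and let E_i^{new} denote the set of edges of C_i having at least one endpoint not contained in V_1 ∪ … ∪ V_{i−1}. Then |E_1^{new} ∪ E_2^{new} ∪ … ∪ E_q^{new}| ≤ 2n. -/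
/-!
Charge every new edge to one of its new endpoints `x`. A vertex is new only on the first cycle
passing through it, and a cycle has exactly two edges at each of its vertices, so every vertex is
charged at most twice.
-/

open SimpleGraph

namespace SimpleGraph

variable {V : Type*} {G : SimpleGraph V}

lemma Subgraph.incidenceSet_subset_image_neighborSet (G' : G.Subgraph) (v : V) :
    G'.incidenceSet v ⊆ (s(v, ·)) '' G'.neighborSet v := by
  rintro e ⟨he, hv⟩
  obtain ⟨w, rfl⟩ := Sym2.mem_iff_exists.mp hv
  exact ⟨w, he, rfl⟩

lemma Walk.finite_incidenceSet_toSubgraph {u w : V} (p : G.Walk u w) (v : V) :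
    (p.toSubgraph.incidenceSet v).Finite :=
  p.edges.finite_toSet.subset fun _ he ↦ p.mem_edges_toSubgraph.mp he.1

lemma Walk.IsCycle.ncard_incidenceSet_toSubgraph_le_two {u : V} {p : G.Walk u u}
    (hp : p.IsCycle) (v : V) : (p.toSubgraph.incidenceSet v).ncard ≤ 2 := by
  have hfin := finite_neighborSet_toSubgraph (w := v) p
  calc (p.toSubgraph.incidenceSet v).ncard
      ≤ ((s(v, ·)) '' p.toSubgraph.neighborSet v).ncard :=
        Set.ncard_le_ncard (p.toSubgraph.incidenceSet_subset_image_neighborSet v)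
          (hfin.image _)
    _ ≤ (p.toSubgraph.neighborSet v).ncard := Set.ncard_image_le hfin
    _ ≤ 2 := by
      by_cases hv : v ∈ p.support
      · exact (hp.ncard_neighborSet_toSubgraph_eq_two hv).le
      · have : p.toSubgraph.neighborSet v = ∅ := Set.eq_empty_of_forall_notMem fun _ hw ↦
          hv (p.mem_verts_toSubgraph.mp (p.toSubgraph.edge_vert hw))
        simp [this]

section FirstVisits

variable {ι : Type*} [LinearOrder ι] {a : ι → V}

def edgesAtFirstVisit (C : ∀ i, G.Walk (a i) (a i)) (x : V) : Set (Sym2 V) :=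
  {f | ∃ i, f ∈ (C i).edges ∧ x ∈ f ∧ ∀ j < i, x ∉ (C j).support}

lemma ncard_edgesAtFirstVisit_le_two {C : ∀ i, G.Walk (a i) (a i)}
    (hC : ∀ i, (C i).IsCycle) (x : V) : (edgesAtFirstVisit C x).ncard ≤ 2 := by
  rcases (edgesAtFirstVisit C x).eq_empty_or_nonempty
    with hempty | ⟨f₀, i₀, hf₀, hx₀, hfirst₀⟩
  · simp [hempty]
  refine (Set.ncard_le_ncard ?_ ((C i₀).finite_incidenceSet_toSubgraph x)).trans
    ((hC i₀).ncard_incidenceSet_toSubgraph_le_two x)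
  rintro f ⟨i, hf, hx, hfirst⟩
  obtain rfl : i = i₀ := le_antisymm
    (not_lt.mp fun h ↦ hfirst i₀ h (Walk.mem_support_of_mem_edges hf₀ hx₀))
    (not_lt.mp fun h ↦ hfirst₀ i h (Walk.mem_support_of_mem_edges hf hx))
  exact ⟨(C i).mem_edges_toSubgraph.mpr hf, hx⟩

theorem ncard_edges_with_new_vertex_le [Fintype V] {C : ∀ i, G.Walk (a i) (a i)}
    (hC : ∀ i, (C i).IsCycle) :
    {f : Sym2 V | ∃ i, f ∈ (C i).edges ∧ ∃ x ∈ f, ∀ j < i, x ∉ (C j).support}.ncard ≤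
      2 * Fintype.card V := by
  calc _ ≤ (⋃ x, edgesAtFirstVisit C x).ncard := by
        refine Set.ncard_le_ncard ?_ (Set.toFinite _)
        rintro f ⟨i, hf, x, hx, hfirst⟩
        exact Set.mem_iUnion.mpr ⟨x, i, hf, hx, hfirst⟩
    _ ≤ ∑ x, (edgesAtFirstVisit C x).ncard := Set.ncard_iUnion_le_of_fintype _
    _ ≤ ∑ _x : V, 2 := Finset.sum_le_sum fun x _ ↦ ncard_edgesAtFirstVisit_le_two hC x
    _ = 2 * Fintype.card V := by simp [mul_comm]

end FirstVisits

end SimpleGraph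

/-- Let `C_1, …, C_q` be cycles of a graph `G` on `n` vertices, and for
each `i` let `E_i^new` be the set of edges of `C_i` with at least one endpoint not in
`V_1 ∪ … ∪ V_{i−1}` (the union of the vertex sets of the previous cycles). Then
`|E_1^new ∪ … ∪ E_q^new| ≤ 2n`. -/
theorem stmt_10 {V : Type*} [Fintype V] (G : SimpleGraph V) (q : ℕ)
    (a : Fin q → V) (C : ∀ i : Fin q, G.Walk (a i) (a i))
    (hC : ∀ i : Fin q, (C i).IsCycle) :
    ({f : Sym2 V | ∃ i : Fin q, f ∈ (C i).edges ∧
        ∃ x ∈ f, ∀ j : Fin q, j < i → x ∉ (C j).support}).ncard ≤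
      2 * Fintype.card V :=
  ncard_edges_with_new_vertex_le hC
end

section
/- For every integer k ≥ 1, let G = I_{3k} and let S be any proper spanning subgraph of G that is a 2-spanner of G (i.e. dist_S(x,y) ≤ 2 · dist_G(x,y) for all vertices x, y, and S omits at least one edge of G). Then S is not 2-resilient: there exists an edge f = (x,y) of S with dist_{S∖f}(x,y) > 2, while dist_{G∖f}(x,y) = 2. -/
open SimpleGraph

/-- The graph `I_{3k}`: vertices are the `k`-element subsets of a `3k`-element set,
two of them adjacent iff they are disjoint. -/
def kneserI (k : ℕ) : SimpleGraph {A : Finset (Fin (3 * k)) // A.card = k} :=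
  SimpleGraph.fromRel
    (fun A B => Disjoint (A : Finset (Fin (3 * k))) (B : Finset (Fin (3 * k))))

lemma kneser_adj_iff {k : ℕ} (A B : {A : Finset (Fin (3 * k)) // A.card = k}) :
    (kneserI k).Adj A B ↔ A ≠ B ∧ Disjoint (A : Finset (Fin (3 * k))) (B : Finset (Fin (3 * k))) := by
  constructor
  · rintro h
    rw [kneserI, SimpleGraph.fromRel_adj] at h
    exact ⟨h.1, h.2.elim id fun h' => h'.symm⟩
  · rintro ⟨h1, h2⟩
    rw [kneserI, SimpleGraph.fromRel_adj]
    exact ⟨h1, Or.inl h2⟩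

lemma third_eq {k : ℕ} (X Y Z : Finset (Fin (3 * k))) (hX : X.card = k) (hY : Y.card = k)
    (hZ : Z.card = k) (hXY : Disjoint X Y) (hZX : Disjoint Z X) (hZY : Disjoint Z Y) :
    Z = (X ∪ Y)ᶜ := by
  apply Finset.eq_of_subset_of_card_le
  · intro z hz
    simp only [Finset.mem_compl, Finset.mem_union, not_or]
    exact ⟨Finset.disjoint_left.mp hZX hz, Finset.disjoint_left.mp hZY hz⟩
  · rw [Finset.card_compl, Finset.card_union_of_disjoint hXY, hX, hY, hZ]
    simp [Fintype.card_fin]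
    omega

lemma two_le_of_enat (x : ℕ∞) (h0 : x ≠ 0) (h1 : x ≠ 1) : 2 ≤ x := by
  cases x with
  | top => exact le_top
  | coe n =>
    have hn0 : n ≠ 0 := by simpa using h0
    have hn1 : n ≠ 1 := by simpa using h1
    have : 2 ≤ n := by omega
    exact_mod_cast this

/-- For `k ≥ 1`, let `G = I_{3k}` and let `S` be any proper spanning
subgraph of `G` that is a 2-spanner of `G`. Then `S` is not 2-resilient: there is an
edge `f = (x,y)` of `S` with `dist_{S∖f}(x,y) > 2` while `dist_{G∖f}(x,y) = 2`. -/
theorem stmt_16 (k : ℕ) (hk : 1 ≤ k)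
    (S : SimpleGraph {A : Finset (Fin (3 * k)) // A.card = k})
    (hS : S ≤ kneserI k) (hproper : S ≠ kneserI k)
    (hspan : ∀ x y : {A : Finset (Fin (3 * k)) // A.card = k},
      S.edist x y ≤ 2 * (kneserI k).edist x y) :
    ∃ x y : {A : Finset (Fin (3 * k)) // A.card = k},
      S.Adj x y ∧
      2 < (S.deleteEdges {s(x, y)}).edist x y ∧
      ((kneserI k).deleteEdges {s(x, y)}).edist x y = 2 := by
  -- find a missing edge (a,b)
  obtain ⟨a, b, hab, hnab⟩ : ∃ a b, (kneserI k).Adj a b ∧ ¬ S.Adj a b := by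
    by_contra h
    push_neg at h
    apply hproper
    ext x y
    exact ⟨fun h' => hS h', fun h' => h x y h'⟩
  have habne : a ≠ b := hab.ne
  have habd : Disjoint (a : Finset (Fin (3 * k))) (b : Finset (Fin (3 * k))) :=
    ((kneser_adj_iff a b).mp hab).2
  -- S.edist a b = 2
  have hG1 : (kneserI k).edist a b = 1 := edist_eq_one_iff_adj.mpr hab
  have hle2 : S.edist a b ≤ 2 := by
    have := hspan a b
    rw [hG1] at this
    simpa using this
  have hne0 : S.edist a b ≠ 0 := by
    rw [ne_eq, edist_eq_zero_iff]; exact habne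
  have hne1 : S.edist a b ≠ 1 := by
    rw [ne_eq, edist_eq_one_iff_adj]; exact hnab
  have hedist2 : S.edist a b = 2 :=
    le_antisymm hle2 (two_le_of_enat _ hne0 hne1)
  -- get the midpoint c
  obtain ⟨p, hp⟩ := exists_walk_of_edist_eq_coe (k := 2) (by exact_mod_cast hedist2)
  obtain ⟨c, hac, hcb⟩ : ∃ c, S.Adj a c ∧ S.Adj c b := by
    cases p with
    | nil => simp at hp
    | cons h q =>
      cases q with
      | nil => simp at hp
      | cons h' q' =>
        cases q' with
        | nil => exact ⟨_, h, h'⟩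
        | cons h'' q'' => simp [Walk.length_cons] at hp
  have hacG : (kneserI k).Adj a c := hS hac
  have hcbG : (kneserI k).Adj c b := hS hcb
  have hacd : Disjoint (a : Finset (Fin (3 * k))) (c : Finset (Fin (3 * k))) :=
    ((kneser_adj_iff a c).mp hacG).2
  have hcbd : Disjoint (c : Finset (Fin (3 * k))) (b : Finset (Fin (3 * k))) :=
    ((kneser_adj_iff c b).mp hcbG).2
  have hacne : a ≠ c := hacG.ne
  have hcbne : c ≠ b := hcbG.ne
  -- b is the unique common neighbor of a and c
  have hbval : (b : Finset (Fin (3 * k))) = ((a : Finset (Fin (3 * k))) ∪ c)ᶜ :=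
    third_eq _ _ _ a.2 c.2 b.2 hacd habd.symm hcbd.symm
  have huniq : ∀ m : {A : Finset (Fin (3 * k)) // A.card = k},
      Disjoint (m : Finset (Fin (3 * k))) (a : Finset (Fin (3 * k))) →
      Disjoint (m : Finset (Fin (3 * k))) (c : Finset (Fin (3 * k))) → m = b := by
    intro m hma hmc
    have : (m : Finset (Fin (3 * k))) = ((a : Finset (Fin (3 * k))) ∪ c)ᶜ :=
      third_eq _ _ _ a.2 c.2 m.2 hacd hma hmc
    exact Subtype.ext (this.trans hbval.symm)
  refine ⟨a, c, hac, ?_, ?_⟩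
  · -- distance in S minus the edge is > 2
    by_contra hle
    push_neg at hle
    have hnetop : (S.deleteEdges {s(a, c)}).edist a c ≠ ⊤ := by
      intro h; rw [h] at hle; simp at hle
    obtain ⟨q, hq⟩ := exists_walk_of_edist_ne_top hnetop
    have hqlen : (q.length : ℕ∞) ≤ 2 := by rw [hq]; exact hle
    have hqlen' : q.length ≤ 2 := by exact_mod_cast hqlen
    cases q with
    | nil => exact hacne rfl
    | cons h1 q1 =>
      cases q1 with
      | nil =>
        rw [SimpleGraph.deleteEdges_adj] at h1
        exact h1.2 (by simp)
      | cons h2 q2 =>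
        cases q2 with
        | nil =>
          rw [SimpleGraph.deleteEdges_adj] at h1 h2
          have hm := huniq _ (((kneser_adj_iff _ _).mp (hS h1.1)).2.symm)
            (((kneser_adj_iff _ _).mp (hS h2.1)).2)
          rw [hm] at h1
          exact hnab h1.1
        | cons h3 q3 => simp [Walk.length_cons] at hqlen'
  · -- distance in G minus the edge is exactly 2
    have hbcG : (kneserI k).Adj b c := (kneser_adj_iff b c).mpr ⟨fun h => hcbne h.symm, hcbd.symm⟩
    have hHab : ((kneserI k).deleteEdges {s(a, c)}).Adj a b := by
      rw [SimpleGraph.deleteEdges_adj]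
      refine ⟨hab, ?_⟩
      simp only [Set.mem_singleton_iff, Sym2.eq_iff]
      rintro (⟨-, h2⟩ | ⟨h1, -⟩)
      · exact hcbne h2.symm
      · exact hacne h1
    have hHbc : ((kneserI k).deleteEdges {s(a, c)}).Adj b c := by
      rw [SimpleGraph.deleteEdges_adj]
      refine ⟨hbcG, ?_⟩
      simp only [Set.mem_singleton_iff, Sym2.eq_iff]
      rintro (⟨h1, -⟩ | ⟨h2, -⟩)
      · exact habne h1.symm
      · exact hcbne h2.symm
    have hup : ((kneserI k).deleteEdges {s(a, c)}).edist a c ≤ 2 := by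
      have := edist_le (Walk.cons hHab (Walk.cons hHbc Walk.nil))
      simpa using this
    refine le_antisymm hup (two_le_of_enat _ ?_ ?_)
    · rw [ne_eq, edist_eq_zero_iff]; exact hacne
    · rw [ne_eq, edist_eq_one_iff_adj, SimpleGraph.deleteEdges_adj]
      rintro ⟨-, hmem⟩
      exact hmem (by simp)
end

section
/- For every integer k ≥ 1, the edge set of G = I_{3k} is partitioned by its triangles (each edge lies in exactly one triangle), and any spanning subgraph S of G obtained by deleting exactly one edge from each triangle of G is a 2-spanner of G, i.e. dist_S(x,y) ≤ 2 · dist_G(x,y) for all vertices x, y. In particular such a 2-spanner S exists and has exactly two thirds of the edges of G. -/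
open SimpleGraph

/-- `S` is obtained from `G` by deleting exactly one edge from each triangle of `G`:
`S ≤ G` and for every triangle `{a,b,c}` of `G`, exactly one of its three edges is
missing from `S`. -/
def oneEdgePerTriangleDeleted {V : Type*} (G S : SimpleGraph V) : Prop :=
  S ≤ G ∧ ∀ a b c : V, G.Adj a b → G.Adj b c → G.Adj a c →
    ((¬ S.Adj a b ∧ S.Adj b c ∧ S.Adj a c) ∨
     (S.Adj a b ∧ ¬ S.Adj b c ∧ S.Adj a c) ∨
     (S.Adj a b ∧ S.Adj b c ∧ ¬ S.Adj a c))

/-!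
Two disjoint `k`-subsets `A`, `B` of a `3k`-set have exactly one common neighbour in `I_{3k}`,
the complement of `A ∪ B`, so every edge lies in exactly one triangle. If one edge is deleted
from each triangle, the endpoints of a deleted edge stay joined through the third vertex of its
triangle, so distances at most double. Counting edge–triangle incidences, `I_{3k}` has three edges
per triangle and `S` has two. Deleting in each triangle the edge opposite to its largest vertex,
for any linear order on the vertices, produces such an `S`.
-/

open Finset

namespace Finset

lemma exists_eq_triple_of_card_eq_three {α : Type*} [DecidableEq α] {s : Finset α}
    (hs : #s = 3) {a b : α} (ha : a ∈ s) (hb : b ∈ s) (hab : a ≠ b) : ∃ c, s = {a, b, c} := by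
  have hb' : b ∈ s.erase a := mem_erase.2 ⟨hab.symm, hb⟩
  obtain ⟨c, hc⟩ := card_eq_one.1 (show #((s.erase a).erase b) = 1 by
    rw [card_erase_of_mem hb', card_erase_of_mem ha, hs])
  exact ⟨c, by rw [← hc, insert_erase hb', insert_erase ha]⟩

end Finset

namespace SimpleGraph

variable {V : Type*} {G H : SimpleGraph V}

lemma edist_le_mul_edist_of_forall_adj_s17 {c : ℕ∞} (hc : c ≠ 0)
    (h : ∀ ⦃u v⦄, G.Adj u v → H.edist u v ≤ c) (x y : V) : H.edist x y ≤ c * G.edist x y := by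
  have hwalk : ∀ {x y : V} (p : G.Walk x y), H.edist x y ≤ c * p.length := by
    intro x y p
    induction p with
    | nil => simp
    | @cons a b d hab p ih =>
      calc H.edist a d ≤ H.edist a b + H.edist b d := SimpleGraph.edist_triangle
        _ ≤ c + c * p.length := add_le_add (h hab) ih
        _ = c * (p.cons hab).length := by push_cast [Walk.length_cons]; ring
  by_cases hxy : G.Reachable x y
  · obtain ⟨p, hp⟩ := hxy.exists_walk_length_eq_edist
    exact hp ▸ hwalk p
  · simp [edist_eq_top_of_not_reachable hxy, ENat.mul_top hc]

lemma locallyLinear_of_existsUnique (hG : ∀ ⦃u v⦄, G.Adj u v → ∃! w, G.Adj u w ∧ G.Adj v w) :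
    G.LocallyLinear := by
  classical
  refine ⟨?_, fun u v huv ↦ ?_⟩
  · rintro s hs t ht hst a ⟨has, hat⟩ b ⟨hbs, hbt⟩
    by_contra hab
    rw [mem_cliqueSet_iff] at hs ht
    obtain ⟨c, rfl⟩ := exists_eq_triple_of_card_eq_three hs.card_eq has hbs hab
    obtain ⟨d, rfl⟩ := exists_eq_triple_of_card_eq_three ht.card_eq hat hbt hab
    obtain ⟨hab', hac, hbc⟩ := is3Clique_triple_iff.1 hs
    obtain ⟨-, had, hbd⟩ := is3Clique_triple_iff.1 ht
    exact hst (by rw [(hG hab').unique ⟨hac, hbc⟩ ⟨had, hbd⟩])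
  · obtain ⟨w, ⟨huw, hvw⟩, -⟩ := hG huv
    exact ⟨{u, v, w}, is3Clique_triple_iff.2 ⟨huv, huw, hvw⟩, by simp, by simp⟩

lemma _root_.oneEdgePerTriangleDeleted.edist_le_two (hS : oneEdgePerTriangleDeleted G H)
    {u v w : V} (huv : G.Adj u v) (huw : G.Adj u w) (hvw : G.Adj v w) : H.edist u v ≤ 2 := by
  rcases hS.2 u w v huw hvw.symm huv with ⟨-, -, h⟩ | ⟨-, -, h⟩ | ⟨huw', hwv', -⟩
  · exact (edist_eq_one_iff_adj.2 h).trans_le one_le_two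
  · exact (edist_eq_one_iff_adj.2 h).trans_le one_le_two
  · calc H.edist u v ≤ H.edist u w + H.edist w v := SimpleGraph.edist_triangle
      _ = 2 := by rw [edist_eq_one_iff_adj.2 huw', edist_eq_one_iff_adj.2 hwv', one_add_one_eq_two]

lemma _root_.oneEdgePerTriangleDeleted.edist_le_two_mul (hS : oneEdgePerTriangleDeleted G H)
    (hG : ∀ ⦃u v⦄, G.Adj u v → ∃ w, G.Adj u w ∧ G.Adj v w) (x y : V) :
    H.edist x y ≤ 2 * G.edist x y :=
  edist_le_mul_edist_of_forall_adj_s17 two_ne_zero (fun _ _ huv ↦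
    let ⟨_, huw, hvw⟩ := hG huv
    hS.edist_le_two huv huw hvw) x y

section Counting

variable [Fintype V] [DecidableEq V] [DecidableRel G.Adj] [DecidableRel H.Adj]

lemma LocallyLinear.card_edgeFinset_of_le {m : ℕ} (hG : G.LocallyLinear) (hH : H ≤ G)
    (hm : ∀ t ∈ G.cliqueFinset 3, #{e ∈ H.edgeFinset | e ∈ t.sym2} = m) :
    #H.edgeFinset = m * #(G.cliqueFinset 3) := by
  rw [← mul_one #H.edgeFinset, mul_comm m]
  refine card_mul_eq_card_mul (fun (e : Sym2 V) (t : Finset V) ↦ e ∈ t.sym2) (fun e he ↦ ?_) hm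
  have he' : e ∈ G.edgeSet := edgeSet_mono hH (mem_edgeFinset.1 he)
  refine le_antisymm ?_ ?_
  · simpa only [card_le_one, mem_bipartiteAbove, and_imp, Set.Subsingleton, Set.mem_ofPred_eq,
      mem_cliqueFinset_iff, mem_cliqueSet_iff]
      using hG.1.mem_sym2_subsingleton (G.not_isDiag_of_mem_edgeSet he')
  · induction e using Sym2.ind with
    | _ u v =>
      obtain ⟨t, ht, hu, hv⟩ := hG.2 he'
      exact card_pos.2 ⟨t, by simp [mem_bipartiteAbove, ht, mem_sym2_iff, hu, hv]⟩

lemma filter_edgeFinset_mem_sym2_triple (a b c : V) :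
    {e ∈ H.edgeFinset | e ∈ ({a, b, c} : Finset V).sym2} =
      {e ∈ ({s(a, b), s(b, c), s(a, c)} : Finset (Sym2 V)) | e ∈ H.edgeSet} := by
  ext e
  induction e using Sym2.ind with
  | _ u v =>
    simp only [mem_filter, mem_edgeFinset, mem_sym2_iff, mem_insert, mem_singleton, Sym2.mem_iff,
      forall_eq_or_imp, forall_eq, mem_edgeSet, Sym2.eq_iff]
    grind [Adj.ne]

lemma _root_.oneEdgePerTriangleDeleted.card_filter_mem_sym2 {t : Finset V}
    (hS : oneEdgePerTriangleDeleted G H) (ht : t ∈ G.cliqueFinset 3) :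
    #{e ∈ H.edgeFinset | e ∈ t.sym2} = 2 := by
  obtain ⟨a, b, c, hab, hac, hbc, rfl⟩ := is3Clique_iff.1 (mem_cliqueFinset_iff.1 ht)
  rw [filter_edgeFinset_mem_sym2_triple]
  rcases hS.2 a b c hab hbc hac with ⟨h₁, h₂, h₃⟩ | ⟨h₁, h₂, h₃⟩ | ⟨h₁, h₂, h₃⟩ <;>
    simp [filter_insert, filter_singleton, mem_edgeSet, h₁, h₂, h₃, hab.ne, hab.ne', hac.ne,
      hbc.ne]

lemma _root_.oneEdgePerTriangleDeleted.three_mul_card_edgeFinset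
    (hS : oneEdgePerTriangleDeleted G H) (hG : G.LocallyLinear) :
    3 * #H.edgeFinset = 2 * #G.edgeFinset := by
  rw [hG.card_edgeFinset, hG.card_edgeFinset_of_le hS.1 fun _ ↦ hS.card_filter_mem_sym2]
  ring

end Counting

def deleteEdgesOppositeMax [LinearOrder V] (G : SimpleGraph V) : SimpleGraph V where
  Adj u v := G.Adj u v ∧ ¬∃ w, G.Adj u w ∧ G.Adj v w ∧ u < w ∧ v < w
  symm := ⟨fun _ _ ⟨h, hw⟩ ↦ ⟨h.symm, fun ⟨w, hu, hv, hu', hv'⟩ ↦ hw ⟨w, hv, hu, hv', hu'⟩⟩⟩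
  loopless := ⟨fun _ h ↦ G.irrefl h.1⟩

lemma deleteEdgesOppositeMax_adj [LinearOrder V] {u v : V} :
    G.deleteEdgesOppositeMax.Adj u v ↔ G.Adj u v ∧ ¬∃ w, G.Adj u w ∧ G.Adj v w ∧ u < w ∧ v < w :=
  Iff.rfl

lemma deleteEdgesOppositeMax_adj_iff [LinearOrder V]
    (hG : ∀ ⦃u v⦄, G.Adj u v → ∃! w, G.Adj u w ∧ G.Adj v w) {a b c : V}
    (hab : G.Adj a b) (hac : G.Adj a c) (hbc : G.Adj b c) :
    G.deleteEdgesOppositeMax.Adj a b ↔ ¬(a < c ∧ b < c) := by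
  rw [deleteEdgesOppositeMax_adj, and_iff_right hab]
  refine not_congr ⟨?_, fun h ↦ ⟨c, hac, hbc, h⟩⟩
  · rintro ⟨w, haw, hbw, h⟩
    rwa [(hG hab).unique ⟨haw, hbw⟩ ⟨hac, hbc⟩] at h

lemma oneEdgePerTriangleDeleted_deleteEdgesOppositeMax [LinearOrder V]
    (hG : ∀ ⦃u v⦄, G.Adj u v → ∃! w, G.Adj u w ∧ G.Adj v w) :
    oneEdgePerTriangleDeleted G G.deleteEdgesOppositeMax := by
  refine ⟨fun _ _ h ↦ (deleteEdgesOppositeMax_adj.1 h).1, fun a b c hab hbc hac ↦ ?_⟩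
  rw [deleteEdgesOppositeMax_adj_iff hG hab hac hbc,
    deleteEdgesOppositeMax_adj_iff hG hbc hab.symm hac.symm,
    deleteEdgesOppositeMax_adj_iff hG hac hab hbc.symm]
  grind [hab.ne, hbc.ne, hac.ne]

lemma exists_oneEdgePerTriangleDeleted
    (hG : ∀ ⦃u v⦄, G.Adj u v → ∃! w, G.Adj u w ∧ G.Adj v w) :
    ∃ S, oneEdgePerTriangleDeleted G S := by
  let : LinearOrder V := IsWellOrder.linearOrder WellOrderingRel
  exact ⟨_, oneEdgePerTriangleDeleted_deleteEdgesOppositeMax hG⟩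

end SimpleGraph

section Kneser

variable {k : ℕ} {A B : {A : Finset (Fin (3 * k)) // A.card = k}}

lemma kneserI_adj : (kneserI k).Adj A B ↔ A ≠ B ∧ Disjoint A.1 B.1 := by
  rw [kneserI, fromRel_adj, disjoint_comm, or_self]

lemma kneserI_adj_iff_of_pos (hk : 0 < k) : (kneserI k).Adj A B ↔ Disjoint A.1 B.1 := by
  refine kneserI_adj.trans (and_iff_right_of_imp fun h hAB ↦ ?_)
  rw [hAB, disjoint_self_iff_empty] at h
  exact hk.ne' (by rw [← B.2, h, card_empty])

lemma pos_of_kneserI_adj (h : (kneserI k).Adj A B) : 0 < k := by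
  by_contra hk
  refine (kneserI_adj.1 h).1 (Subtype.ext ?_)
  rw [card_eq_zero.1 (A.2.trans (by omega)), card_eq_zero.1 (B.2.trans (by omega))]

lemma kneserI_existsUnique_adj_adj (hAB : (kneserI k).Adj A B) :
    ∃! C, (kneserI k).Adj A C ∧ (kneserI k).Adj B C := by
  simp_rw [kneserI_adj_iff_of_pos (pos_of_kneserI_adj hAB)] at hAB ⊢
  have hcard : #(A.1 ∪ B.1)ᶜ = k := by
    rw [card_compl, card_union_of_disjoint hAB, A.2, B.2, Fintype.card_fin]
    omega
  refine ⟨⟨_, hcard⟩, ⟨?_, ?_⟩, fun C ⟨hAC, hBC⟩ ↦ Subtype.ext ?_⟩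
  · exact disjoint_compl_right.mono_left subset_union_left
  · exact disjoint_compl_right.mono_left subset_union_right
  · refine eq_of_subset_of_card_le ?_ (by rw [C.2, hcard])
    exact subset_compl_iff_disjoint_right.2 (disjoint_union_right.2 ⟨hAC.symm, hBC.symm⟩)

end Kneser

theorem stmt_17_general (k : ℕ) :
    (∀ u v : {A : Finset (Fin (3 * k)) // A.card = k}, (kneserI k).Adj u v →
      ∃! w : {A : Finset (Fin (3 * k)) // A.card = k},
        (kneserI k).Adj u w ∧ (kneserI k).Adj v w) ∧
    (∀ S : SimpleGraph {A : Finset (Fin (3 * k)) // A.card = k},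
      oneEdgePerTriangleDeleted (kneserI k) S →
        (∀ x y : {A : Finset (Fin (3 * k)) // A.card = k},
          S.edist x y ≤ 2 * (kneserI k).edist x y) ∧
        3 * S.edgeSet.ncard = 2 * (kneserI k).edgeSet.ncard) ∧
    (∃ S : SimpleGraph {A : Finset (Fin (3 * k)) // A.card = k},
      oneEdgePerTriangleDeleted (kneserI k) S) := by
  classical
  have hG : ∀ ⦃u v⦄, (kneserI k).Adj u v → ∃! w, (kneserI k).Adj u w ∧ (kneserI k).Adj v w :=
    fun _ _ ↦ kneserI_existsUnique_adj_adj
  refine ⟨fun _ _ h ↦ hG h, fun S hS ↦ ⟨hS.edist_le_two_mul fun _ _ h ↦ (hG h).exists, ?_⟩,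
    exists_oneEdgePerTriangleDeleted hG⟩
  rw [← coe_edgeFinset, ← coe_edgeFinset, Set.ncard_coe_finset, Set.ncard_coe_finset]
  exact hS.three_mul_card_edgeFinset (locallyLinear_of_existsUnique hG)

/-- For `k ≥ 1`, the edge set of `G = I_{3k}` is partitioned by its
triangles (each edge lies in exactly one triangle, i.e. the endpoints of each edge
have exactly one common neighbor); every spanning subgraph `S` of `G` obtained by
deleting exactly one edge from each triangle is a 2-spanner of `G` with exactly two
thirds of the edges of `G`; and such a subgraph `S` exists. -/
theorem stmt_17 (k : ℕ) (hk : 1 ≤ k) :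
    (∀ u v : {A : Finset (Fin (3 * k)) // A.card = k}, (kneserI k).Adj u v →
      ∃! w : {A : Finset (Fin (3 * k)) // A.card = k},
        (kneserI k).Adj u w ∧ (kneserI k).Adj v w) ∧
    (∀ S : SimpleGraph {A : Finset (Fin (3 * k)) // A.card = k},
      oneEdgePerTriangleDeleted (kneserI k) S →
        (∀ x y : {A : Finset (Fin (3 * k)) // A.card = k},
          S.edist x y ≤ 2 * (kneserI k).edist x y) ∧
        3 * S.edgeSet.ncard = 2 * (kneserI k).edgeSet.ncard) ∧
    (∃ S : SimpleGraph {A : Finset (Fin (3 * k)) // A.card = k},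
      oneEdgePerTriangleDeleted (kneserI k) S) :=
  stmt_17_general k
end
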